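/- arXiv:2510.17451 — 3 statements merged into one kernel-verified Lean document; each statement's English description precedes it below -/
import Mathlib

section
/- Let G be a simple graph, let S be a finite shattered set of G, let Z be a finite set of vertices of G, and let u, v ∈ S be distinct vertices with u ∉ Z, v ∉ Z, such that u and v are not reachable from each other in the subgraph of G induced on the complement of Z (i.e., Z separates u from v). Then 2^{|S| − 2} ≤ |Z| (equivalently, |S| ≤ log₂ |Z| + 2). -/
/-! For every `A ⊆ S \ {u, v}` shattering provides a vertex `w_A` whose neighbourhood meets `S`
in exactly `A ∪ {u, v}`. Such a `w_A` is a common neighbour of `u` and `v`, so it must lie in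
the separator `Z`, and `A ↦ w_A` is injective because `A` is recovered as `N(w_A) ∩ S \ {u, v}`. -/

namespace SimpleGraph

variable {V : Type*} (G : SimpleGraph V)

def Shatters (S : Set V) : Prop :=
  ∀ A ⊆ S, ∃ w : V, G.neighborSet w ∩ S = A

variable {G}

theorem Shatters.two_pow_ncard_sdiff_le {S P : Set V} (hS : G.Shatters S) (hSfin : S.Finite)
    (hPS : P ⊆ S) (hfin : {w | P ⊆ G.neighborSet w}.Finite) :
    2 ^ (S \ P).ncard ≤ {w | P ⊆ G.neighborSet w}.ncard := by
  have : Nonempty V := let ⟨w, _⟩ := hS ∅ (Set.empty_subset S); ⟨w⟩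
  choose! f hf using hS
  have hf' : ∀ A ⊆ S \ P, G.neighborSet (f (A ∪ P)) ∩ S = A ∪ P := fun A hA =>
    hf _ (Set.union_subset (hA.trans Set.sdiff_subset) hPS)
  rw [← Set.ncard_powerset _ hSfin.sdiff]
  refine Set.ncard_le_ncard_of_injOn (fun A => f (A ∪ P)) (fun A hA => ?_)
    (fun A hA B hB hAB => ?_) hfin
  · exact fun x hx => ((hf' A hA).symm.subset (Or.inr hx)).1
  · have recover : ∀ C ⊆ S \ P, (G.neighborSet (f (C ∪ P)) ∩ S) \ P = C := fun C hC => by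
      rw [hf' C hC, Set.union_sdiff_right, sdiff_eq_left]
      exact Set.disjoint_of_subset_left hC Set.disjoint_sdiff_left
    rw [← recover A hA, ← recover B hB]
    exact congrArg (fun w => (G.neighborSet w ∩ S) \ P) hAB

theorem mem_of_adj_of_adj_of_not_reachable_induce_compl {Z : Set V} {u v w : V} (huZ : u ∉ Z)
    (hvZ : v ∉ Z) (hsep : ¬ (G.induce Zᶜ).Reachable ⟨u, huZ⟩ ⟨v, hvZ⟩) (hwu : G.Adj w u)
    (hwv : G.Adj w v) : w ∈ Z := by
  by_contra hwZ
  have hu : (G.induce Zᶜ).Adj ⟨u, huZ⟩ ⟨w, hwZ⟩ := hwu.symm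
  have hv : (G.induce Zᶜ).Adj ⟨w, hwZ⟩ ⟨v, hvZ⟩ := hwv
  exact hsep (hu.reachable.trans hv.reachable)

end SimpleGraph

/-- If `S` is a finite shattered set of a simple graph `G`, `Z` is a finite
vertex set, and `u, v ∈ S` are distinct vertices outside `Z` that are not reachable from
each other in the subgraph induced on the complement of `Z`, then `2 ^ (|S| - 2) ≤ |Z|`. -/
theorem stmt_6 {V : Type*} (G : SimpleGraph V) (S Z : Set V)
    (hSfin : S.Finite) (hZfin : Z.Finite)
    (hshat : ∀ A ⊆ S, ∃ w : V, G.neighborSet w ∩ S = A)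
    (u v : V) (hu : u ∈ S) (hv : v ∈ S) (huv : u ≠ v)
    (huZ : u ∉ Z) (hvZ : v ∉ Z)
    (hsep : ¬ (G.induce (Zᶜ : Set V)).Reachable ⟨u, huZ⟩ ⟨v, hvZ⟩) :
    2 ^ (S.ncard - 2) ≤ Z.ncard := by
  have huvS : {u, v} ⊆ S := Set.insert_subset hu (Set.singleton_subset_iff.mpr hv)
  have hcommon : {w | {u, v} ⊆ G.neighborSet w} ⊆ Z := fun w hw =>
    G.mem_of_adj_of_adj_of_not_reachable_induce_compl huZ hvZ hsep
      (hw (Set.mem_insert u {v})) (hw (Set.mem_insert_of_mem u rfl))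
  calc 2 ^ (S.ncard - 2) = 2 ^ (S \ {u, v}).ncard := by
        rw [Set.ncard_sdiff huvS, Set.ncard_pair huv]
    _ ≤ {w | {u, v} ⊆ G.neighborSet w}.ncard :=
        SimpleGraph.Shatters.two_pow_ncard_sdiff_le hshat hSfin huvS (hZfin.subset hcommon)
    _ ≤ Z.ncard := Set.ncard_le_ncard hcommon hZfin
end

section
/- Let G be a finite simple graph, let w ≥ 1 be a natural number, and let (T, β) be a tree-decomposition of G of width at most w, i.e.: T is a finite nonempty tree (a connected acyclic simple graph); β assigns to each node t of T a finite set β(t) of vertices of G with |β(t)| ≤ w + 1; for every edge uv of G there is a node t with u, v ∈ β(t); and for every vertex v of G the set of nodes {t : v ∈ β(t)} is nonempty and induces a connected subgraph of T. Then every finite shattered set S of G satisfies: either 2^{|S| − 2} ≤ w (equivalently |S| ≤ log₂ w + 2), or there exists a node t of T with S ⊆ β(t). -/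
/-!
If no bag contains `S`, the Helly property of subtrees gives `u, v ∈ S` whose subtrees
`{t | u ∈ β t}` and `{t | v ∈ β t}` are disjoint. The node `t` of the first one closest to the
second lies on every subtree meeting both, so `β t` contains `u` and every common neighbour of
`u` and `v`. Shattering provides `2 ^ (|S| - 2)` distinct common neighbours, one realising
`A ∪ {u, v}` for each `A ⊆ S \ {u, v}`, and they all lie in `β t \ {u}`, of size at most `w`.
-/

open Finset

namespace SimpleGraph

variable {ι : Type*} {T : SimpleGraph ι}

lemma Walk.IsTrail.exists_boundary_adj {P : Set ι} {a b : ι} {p : T.Walk a b} (hp : p.IsTrail)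
    (ha : a ∈ P) (hb : b ∉ P) :
    ∃ t ∈ P, ∃ t' ∉ P, T.Adj t t' ∧ (T.deleteEdges {s(t, t')}).Reachable t' b := by
  induction p with
  | nil => exact absurd ha hb
  | @cons u v c h q ih =>
    rw [Walk.isTrail_cons] at hp
    by_cases hv : v ∈ P
    · exact ih hp.1 hv hb
    · refine ⟨u, ha, v, hv, h, ⟨q.toDeleteEdges _ ?_⟩⟩
      rintro e he rfl
      exact hp.2 he

lemma Preconnected.mem_of_not_reachable_deleteEdges {P : Set ι} (hP : (T.induce P).Preconnected)
    {a b t t' : ι} (ha : a ∈ P) (hb : b ∈ P)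
    (hab : ¬ (T.deleteEdges {s(t, t')}).Reachable a b) : t ∈ P ∧ t' ∈ P := by
  obtain ⟨p⟩ := hP ⟨a, ha⟩ ⟨b, hb⟩
  set q := p.map (Embedding.induce P).toHom
  have hsupp : ∀ x ∈ q.support, x ∈ P := by
    simp only [q, Walk.support_map, List.mem_map]
    rintro _ ⟨y, -, rfl⟩
    exact y.2
  by_cases he : s(t, t') ∈ q.edges
  · exact ⟨hsupp t (q.fst_mem_support_of_mem_edges he),
      hsupp t' (q.snd_mem_support_of_mem_edges he)⟩
  · exact absurd ⟨q.toDeleteEdges _ fun e hq hs => he (Set.mem_singleton_iff.mp hs ▸ hq)⟩ hab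

lemma Preconnected.exists_adj_forall_reachable_deleteEdges (hT : T.Preconnected) {P : Set ι}
    (hP : (T.induce P).Connected) {t : ι} (ht : t ∉ P) :
    ∃ n, T.Adj t n ∧ ∀ a ∈ P, (T.deleteEdges {s(t, n)}).Reachable n a := by
  classical
  obtain ⟨⟨a₀, ha₀⟩⟩ := hP.nonempty
  obtain ⟨p⟩ := hT t a₀
  obtain ⟨t, rfl, n, -, htn, hna₀⟩ :=
    p.toPath.2.isTrail.exists_boundary_adj (P := {t}) rfl fun h => ht (h ▸ ha₀)
  refine ⟨n, htn, fun a ha => ?_⟩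
  by_contra hna
  exact ht (hP.preconnected.mem_of_not_reachable_deleteEdges ha₀ ha
    fun h => hna (hna₀.trans h)).1

/-- Otherwise `t ↦ s(t, g t)` would inject the vertices of the tree into its edges. -/
lemma IsTree.exists_apply_apply_eq_self [Finite ι] (hT : T.IsTree) {g : ι → ι}
    (hg : ∀ t, T.Adj t (g t)) : ∃ t, g (g t) = t := by
  have := Fintype.ofFinite ι
  have := Fintype.ofFinite T.edgeSet
  by_contra! hcon
  have hinj : Function.Injective
      fun t => (⟨s(t, g t), mem_edgeFinset.mpr (hg t)⟩ : T.edgeFinset) := by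
    intro x y hxy
    rcases Sym2.eq_iff.mp (congrArg Subtype.val hxy) with ⟨h, -⟩ | ⟨rfl, h⟩
    · exact h
    · exact absurd h (hcon y)
  have := Fintype.card_le_of_injective _ hinj
  rw [Fintype.card_coe] at this
  have := hT.card_edgeFinset
  omega

/-- Helly property of subtrees. Orient each node towards a subtree avoiding it; a 2-cycle of
this orientation is an edge separating two of the subtrees. -/
theorem IsTree.exists_forall_mem_of_pairwise_inter_nonempty [Finite ι] (hT : T.IsTree)
    {α : Type*} {I : α → Set ι} (hI : ∀ a, (T.induce (I a)).Connected)
    (hI₂ : ∀ a b, (I a ∩ I b).Nonempty) : ∃ t, ∀ a, t ∈ I a := by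
  by_contra! h
  choose s hs using h
  choose g hadj hside using fun t =>
    hT.connected.preconnected.exists_adj_forall_reachable_deleteEdges (hI (s t)) (hs t)
  obtain ⟨t, ht⟩ := hT.exists_apply_apply_eq_self hadj
  obtain ⟨x, hx₁, hx₂⟩ := hI₂ (s t) (s (g t))
  have h₁ := hside t x hx₁
  have h₂ := hside (g t) x hx₂
  rw [ht, Sym2.eq_swap] at h₂
  exact isAcyclic_iff_forall_adj_isBridge.mp hT.isAcyclic (hadj t) (h₂.trans h₁.symm)

lemma IsTree.exists_mem_forall_mem_of_disjoint (hT : T.IsTree) {P Q : Set ι}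
    (hP : (T.induce P).Connected) (hQ : (T.induce Q).Connected) (hPQ : Disjoint P Q) :
    ∃ t ∈ P, ∀ R : Set ι, (T.induce R).Preconnected →
      (R ∩ P).Nonempty → (R ∩ Q).Nonempty → t ∈ R := by
  classical
  obtain ⟨⟨a, ha⟩⟩ := hP.nonempty
  obtain ⟨⟨b, hb⟩⟩ := hQ.nonempty
  obtain ⟨p⟩ := hT.connected.preconnected a b
  obtain ⟨t, ht, t', ht', hadj, ht'b⟩ :=
    p.toPath.2.isTrail.exists_boundary_adj ha (hPQ.notMem_of_mem_right hb)
  have hbridge := isAcyclic_iff_forall_adj_isBridge.mp hT.isAcyclic hadj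
  have hPside : ∀ x ∈ P, (T.deleteEdges {s(t, t')}).Reachable t x := fun x hx => by
    by_contra h
    exact ht' (hP.preconnected.mem_of_not_reachable_deleteEdges ht hx h).2
  have hQside : ∀ x ∈ Q, (T.deleteEdges {s(t, t')}).Reachable t' x := fun x hx => by
    by_contra h
    exact hPQ.notMem_of_mem_left ht
      (hQ.preconnected.mem_of_not_reachable_deleteEdges hb hx fun h' => h (ht'b.trans h')).1
  refine ⟨t, ht, fun R hR ⟨x, hxR, hxP⟩ ⟨y, hyR, hyQ⟩ => ?_⟩
  exact (hR.mem_of_not_reachable_deleteEdges hxR hyR fun h =>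
    hbridge ((hPside x hxP).trans (h.trans (hQside y hyQ).symm))).1

lemma two_pow_card_sub_two_le_card_of_commonNeighbors_subset {V : Type*} {G : SimpleGraph V}
    {S C : Finset V} (hS : ∀ A ⊆ S, ∃ x, G.neighborSet x ∩ S = A) {u v : V} (hu : u ∈ S)
    (hv : v ∈ S) (huv : u ≠ v) (hC : G.commonNeighbors u v ⊆ C) : 2 ^ (#S - 2) ≤ #C := by
  classical
  have hcard : #(S \ {u, v}) = #S - 2 := by
    rw [card_sdiff_of_subset (by simp [insert_subset_iff, hu, hv]), card_pair huv]
  rw [← hcard, ← card_powerset]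
  refine card_le_card_of_surjOn (fun x => {y ∈ S | G.Adj x y} \ {u, v}) fun A hA => ?_
  rw [mem_coe, mem_powerset, subset_sdiff] at hA
  obtain ⟨x, hx⟩ := hS (A ∪ {u, v}) (union_subset hA.1 (by simp [insert_subset_iff, hu, hv]))
  have hadj : ∀ y, G.Adj x y ∧ y ∈ S ↔ y = u ∨ y = v ∨ y ∈ A := by
    simpa [Set.ext_iff] using hx
  refine ⟨x, hC ⟨((hadj u).2 (by simp)).1.symm, ((hadj v).2 (by simp)).1.symm⟩, ?_⟩
  ext y
  grind [hA.2]

end SimpleGraph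

open SimpleGraph

theorem stmt_7_general {V ι : Type*} (G : SimpleGraph V)
    (w : ℕ) [Fintype ι]
    (T : SimpleGraph ι) (hT : T.IsTree)
    (β : ι → Finset V) (hwidth : ∀ t, (β t).card ≤ w + 1)
    (hedge : ∀ u v : V, G.Adj u v → ∃ t, u ∈ β t ∧ v ∈ β t)
    (hconn : ∀ v : V, (T.induce {t : ι | v ∈ β t}).Connected)
    (S : Finset V)
    (hshat : ∀ A ⊆ S, ∃ x : V, G.neighborSet x ∩ (S : Set V) = (A : Set V)) :
    2 ^ (S.card - 2) ≤ w ∨ ∃ t, S ⊆ β t := by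
  classical
  by_cases hpair : ∀ u ∈ S, ∀ v ∈ S, ({t | u ∈ β t} ∩ {t | v ∈ β t}).Nonempty
  · obtain ⟨t, ht⟩ := hT.exists_forall_mem_of_pairwise_inter_nonempty (fun s : S => hconn s)
      fun a b => hpair a a.2 b b.2
    exact .inr ⟨t, fun s hs => ht ⟨s, hs⟩⟩
  push Not at hpair
  obtain ⟨u, hu, v, hv, huv⟩ := hpair
  have hne : u ≠ v := by
    rintro rfl
    obtain ⟨⟨t, ht⟩⟩ := (hconn u).nonempty
    exact huv.subset ⟨ht, ht⟩
  obtain ⟨t, hut, ht⟩ := hT.exists_mem_forall_mem_of_disjoint (hconn u) (hconn v)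
    (Set.disjoint_iff_inter_eq_empty.mpr huv)
  have hC : G.commonNeighbors u v ⊆ (β t).erase u := by
    rintro x ⟨hux, hvx⟩
    obtain ⟨t₁, hx₁, hu₁⟩ := hedge x u hux.symm
    obtain ⟨t₂, hx₂, hv₂⟩ := hedge x v hvx.symm
    exact mem_erase.mpr ⟨hux.ne', ht _ (hconn x).preconnected ⟨t₁, hx₁, hu₁⟩ ⟨t₂, hx₂, hv₂⟩⟩
  left
  calc 2 ^ (#S - 2) ≤ #((β t).erase u) :=
        two_pow_card_sub_two_le_card_of_commonNeighbors_subset hshat hu hv hne hC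
    _ ≤ w := by
        rw [card_erase_of_mem hut]
        exact Nat.sub_le_of_le_add (hwidth t)

/-- Let `(T, β)` be a tree-decomposition of width at most `w ≥ 1` of a finite
simple graph `G`. Then every finite shattered set `S` of `G` satisfies `2 ^ (|S| - 2) ≤ w`
or is entirely contained in some bag. -/
theorem stmt_7 {V ι : Type*} [Fintype V] (G : SimpleGraph V)
    (w : ℕ) (hw : 1 ≤ w) [Fintype ι] [Nonempty ι]
    (T : SimpleGraph ι) (hT : T.IsTree)
    (β : ι → Finset V) (hwidth : ∀ t, (β t).card ≤ w + 1)
    (hedge : ∀ u v : V, G.Adj u v → ∃ t, u ∈ β t ∧ v ∈ β t)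
    (hconn : ∀ v : V, (T.induce {t : ι | v ∈ β t}).Connected)
    (S : Finset V)
    (hshat : ∀ A ⊆ S, ∃ x : V, G.neighborSet x ∩ (S : Set V) = (A : Set V)) :
    2 ^ (S.card - 2) ≤ w ∨ ∃ t, S ⊆ β t :=
  stmt_7_general G w T hT β hwidth hedge hconn S hshat
end

section
/- In the reduction graph construction (see context), suppose |X| > k and there exist vertices u_1 ∈ U_1, …, u_k ∈ U_k that are pairwise related by R. Then G contains a shattered set of size k, namely S = {u_1, …, u_k}. -/
/-!
Write `S = {u i}`. Since the `U i` are pairwise disjoint, the `u i` are distinct, and a subset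
`T ⊆ S` is `u '' s` for a set of indices `s`. It is cut out of `S` by: any vertex of `X` if
`s = ∅` (as `X` is independent), the `I₁`-vertex of `u i` if `s = {i}`, the `I₂`-vertex of the
pair if `s = {i, j}` (the `u i` are pairwise consistent), and the `I_{≥3}`-vertex of `s` if
`|s| ≥ 3`, because `⋃_{i ∈ s} U i` meets `S` exactly in `u '' s`.
-/

open Set Function

theorem Pairwise.injective_of_forall_mem {V ι : Type*} {U : ι → Set V} {u : ι → V}
    (hU : Pairwise (Disjoint on U)) (hu : ∀ i, u i ∈ U i) : Injective u :=
  fun i j hij => hU.eq (not_disjoint_iff.2 ⟨u i, hu i, hij ▸ hu j⟩)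

theorem Set.biUnion_inter_range_eq_image {V ι : Type*} {U : ι → Set V} {u : ι → V}
    (hU : Pairwise (Disjoint on U)) (hu : ∀ i, u i ∈ U i) (A : Set ι) :
    (⋃ i ∈ A, U i) ∩ range u = u '' A := by
  ext v
  constructor
  · rintro ⟨hv, j, rfl⟩
    obtain ⟨i, hi, hji⟩ := mem_iUnion₂.1 hv
    obtain rfl : i = j := hU.eq (not_disjoint_iff.2 ⟨u j, hji, hu j⟩)
    exact mem_image_of_mem u hi
  · rintro ⟨i, hi, rfl⟩
    exact ⟨mem_biUnion hi (hu i), mem_range_self i⟩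

namespace SimpleGraph

variable {V ι : Type*} (G : SimpleGraph V) {U : ι → Set V} {u : ι → V}

theorem neighborSet_inter_range_of_eq_image {w : V} {s : Set ι}
    (hw : G.neighborSet w = u '' s) : G.neighborSet w ∩ range u = u '' s := by
  rw [hw, inter_eq_left]
  exact image_subset_range u s

theorem exists_neighborSet_inter_range_eq_image [Nonempty ι]
    (hU : Pairwise (Disjoint on U)) (hu : ∀ i, u i ∈ U i)
    (hind : ∀ i j, ¬ G.Adj (u i) (u j))
    (h₁ : ∀ i, ∃ w, G.neighborSet w = {u i})
    (h₂ : ∀ i j, i ≠ j → ∃ w, G.neighborSet w = {u i, u j})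
    (h₃ : ∀ A : Finset ι, 3 ≤ A.card → ∃ w, G.neighborSet w = ⋃ i ∈ A, U i)
    (s : Finset ι) : ∃ w, G.neighborSet w ∩ range u = u '' s := by
  rcases Nat.lt_or_ge s.card 3 with hlt | hge
  · interval_cases hcard : s.card
    · rw [Finset.card_eq_zero.1 hcard]
      obtain ⟨i⟩ := ‹Nonempty ι›
      refine ⟨u i, ?_⟩
      rw [Finset.coe_empty, image_empty, eq_empty_iff_forall_notMem]
      rintro _ ⟨hadj, j, rfl⟩
      exact hind i j hadj
    · obtain ⟨i, hs⟩ := Finset.card_eq_one.1 hcard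
      obtain ⟨w, hw⟩ := h₁ i
      refine ⟨w, G.neighborSet_inter_range_of_eq_image ?_⟩
      rw [hw, hs, Finset.coe_singleton, image_singleton]
    · classical
      obtain ⟨i, j, hij, hs⟩ := Finset.card_eq_two.1 hcard
      obtain ⟨w, hw⟩ := h₂ i j hij
      refine ⟨w, G.neighborSet_inter_range_of_eq_image ?_⟩
      rw [hw, hs, Finset.coe_pair, image_pair]
  · obtain ⟨w, hw⟩ := h₃ s hge
    exact ⟨w, by rw [hw, ← Finset.set_biUnion_coe, biUnion_inter_range_eq_image hU hu]⟩

end SimpleGraph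

theorem stmt_14_general {V : Type*} (G : SimpleGraph V) (k : ℕ) (hk : 3 ≤ k)
    (U : Fin k → Set V) (X I₁ I₂ I₃ : Set V) (R : V → V → Prop)
    (hUdisj : ∀ i j, i ≠ j → Disjoint (U i) (U j))
    (hX : X = ⋃ i, U i)
    (hXind : ∀ u ∈ X, ∀ v ∈ X, ¬ G.Adj u v)
    (hI1' : ∀ u ∈ X, ∃ w ∈ I₁, G.neighborSet w = {u})
    (hI2' : ∀ (i j : Fin k), ∀ u ∈ U i, ∀ v ∈ U j, i ≠ j → R u v →
      ∃ w ∈ I₂, G.neighborSet w = {u, v})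
    (hI3' : ∀ A : Finset (Fin k), 3 ≤ A.card →
      ∃ w ∈ I₃, G.neighborSet w = ⋃ i ∈ A, U i)
    (u : Fin k → V) (hu : ∀ i, u i ∈ U i)
    (hR : ∀ i j, i ≠ j → R (u i) (u j)) :
    (Set.range u).ncard = k ∧
      ∀ T ⊆ Set.range u, ∃ w : V, G.neighborSet w ∩ Set.range u = T := by
  have hU : Pairwise (Disjoint on U) := hUdisj
  have huX : ∀ i, u i ∈ X := fun i => hX ▸ mem_iUnion_of_mem i (hu i)
  have : Nonempty (Fin k) := ⟨⟨0, by omega⟩⟩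
  refine ⟨?_, fun T hT => ?_⟩
  · rw [ncard_range_of_injective (hU.injective_of_forall_mem hu), Nat.card_fin]
  obtain ⟨w, hw⟩ := G.exists_neighborSet_inter_range_eq_image hU hu
    (fun i j => hXind _ (huX i) _ (huX j))
    (fun i => (hI1' _ (huX i)).imp fun _ => And.right)
    (fun i j hij => (hI2' i j _ (hu i) _ (hu j) hij (hR i j hij)).imp fun _ => And.right)
    (fun A hA => (hI3' A hA).imp fun _ => And.right) (toFinite (u ⁻¹' T)).toFinset
  rw [Finite.coe_toFinset, image_preimage_eq_of_subset hT] at hw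
  exact ⟨w, hw⟩

/-- completeness of the reduction: in the reduction graph construction —
`G` a simple graph whose vertex set is partitioned into `X = U_1 ∪ ⋯ ∪ U_k` (the `U i`
finite, nonempty, pairwise disjoint), `I₁`, `I₂`, `I₃` (= I_{≥3}), with `X` independent,
`I₁` consisting exactly of the vertices with neighborhood `{u}` for each `u ∈ X`, `I₂` of
the vertices with neighborhood `{u, v}` for each pair `u ∈ U i`, `v ∈ U j`, `i ≠ j`,
`R u v`, and `I₃` of the vertices with neighborhood `⋃_{i ∈ A} U i` for each
`A ⊆ {1,…,k}` with `|A| ≥ 3` (`R` symmetric and irreflexive) — if `|X| > k` and there are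
`u i ∈ U i` pairwise related by `R`, then `S = {u 1, …, u k}` is a shattered set of `G`
of size `k`. -/
theorem stmt_14 {V : Type*} (G : SimpleGraph V) (k : ℕ) (hk : 3 ≤ k)
    (U : Fin k → Set V) (X I₁ I₂ I₃ : Set V) (R : V → V → Prop)
    (hUfin : ∀ i, (U i).Finite) (hUne : ∀ i, (U i).Nonempty)
    (hUdisj : ∀ i j, i ≠ j → Disjoint (U i) (U j))
    (hX : X = ⋃ i, U i)
    (hRsymm : ∀ u v, R u v → R v u) (hRirr : ∀ u, ¬ R u u)
    (hpart : ∀ v : V, v ∈ X ∨ v ∈ I₁ ∨ v ∈ I₂ ∨ v ∈ I₃)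
    (hd1 : Disjoint X I₁) (hd2 : Disjoint X I₂) (hd3 : Disjoint X I₃)
    (hd4 : Disjoint I₁ I₂) (hd5 : Disjoint I₁ I₃) (hd6 : Disjoint I₂ I₃)
    (hXind : ∀ u ∈ X, ∀ v ∈ X, ¬ G.Adj u v)
    (hI1 : ∀ w ∈ I₁, ∃ u ∈ X, G.neighborSet w = {u})
    (hI1' : ∀ u ∈ X, ∃ w ∈ I₁, G.neighborSet w = {u})
    (hI2 : ∀ w ∈ I₂, ∃ (i j : Fin k), ∃ u ∈ U i, ∃ v ∈ U j,
      i ≠ j ∧ R u v ∧ G.neighborSet w = {u, v})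
    (hI2' : ∀ (i j : Fin k), ∀ u ∈ U i, ∀ v ∈ U j, i ≠ j → R u v →
      ∃ w ∈ I₂, G.neighborSet w = {u, v})
    (hI3 : ∀ w ∈ I₃, ∃ A : Finset (Fin k), 3 ≤ A.card ∧
      G.neighborSet w = ⋃ i ∈ A, U i)
    (hI3' : ∀ A : Finset (Fin k), 3 ≤ A.card →
      ∃ w ∈ I₃, G.neighborSet w = ⋃ i ∈ A, U i)
    (hXcard : k < X.ncard)
    (u : Fin k → V) (hu : ∀ i, u i ∈ U i)
    (hR : ∀ i j, i ≠ j → R (u i) (u j)) :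
    (Set.range u).ncard = k ∧
      ∀ T ⊆ Set.range u, ∃ w : V, G.neighborSet w ∩ Set.range u = T :=
  stmt_14_general G k hk U X I₁ I₂ I₃ R hUdisj hX hXind hI1' hI2' hI3' u hu hR
end
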